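/- arXiv:2503.01514 — 2 statements merged into one kernel-verified Lean document; each statement's English description precedes it below -/
import Mathlib

section
/- Under the repeated random objects model, the estimator σ̂_j² = (1/N_j)·Σ_{i∈G_j}(Σ_{l=1}^{r_i} d²(μ̂_j,Y_{il}))² − ((Σ_{i∈G_j} r_i²)/N_j)·V̂_j² converges in probability, as n → ∞, to σ_j² = Var(d²(μ_j,Y_{il})) + (a_r − 1)·Cov(d²(μ_j,Y_{il}), d²(μ_j,Y_{ik})) for l ≠ k, i ∈ G_j; i.e., σ̂_j² is a consistent estimator of the asymptotic variance of N_j^{1/2}·V̂_j. -/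
/-!
Write `Sᵢ(w) = Σ_l d²(w, Y_{il})` for the row totals, so that `σ̂² = σ̂²(μ̂)` with
`σ̂²(w) = (1/N) Σᵢ Sᵢ(w)² - (Σᵢ rᵢ²/N) ((1/N) Σᵢ Sᵢ(w))²`. On a bounded space `w ↦ σ̂²(w)` is
Lipschitz, uniformly in the data and in `n`, so consistency of `μ̂` reduces the claim to `w = μ`.
There the rows `Sᵢ(μ)` are independent and bounded, hence by Chebyshev both pooled means
concentrate at their expectations. Exchangeability gives `E Sᵢ = rᵢ m₁` and
`E Sᵢ² = rᵢ m₂ + (rᵢ² - rᵢ) m₁₁`, where `m₁ = E d²(μ, Y)`, `m₂ = E d⁴(μ, Y)` and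
`m₁₁ = E d²(μ, Y_l) d²(μ, Y_k)` for `l ≠ k`; so `σ̂²(μ)` tends to
`m₂ + (a_r - 1) m₁₁ - a_r m₁²`, which is `σ²` written without covariances.
-/

open MeasureTheory ProbabilityTheory Filter Finset

/-- The covariance of two real-valued random variables. -/
noncomputable def cov {α : Type*} [MeasurableSpace α] (P : Measure α) (X Y : α → ℝ) : ℝ :=
  ∫ a, (X a - ∫ a', X a' ∂P) * (Y a - ∫ a', Y a' ∂P) ∂P

open Topology

lemma MeasureTheory.Integrable.of_abs_le {α : Type*} [MeasurableSpace α] {μ : Measure α}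
    [IsFiniteMeasure μ] {f : α → ℝ} (hf : Measurable f) {c : ℝ} (hfc : ∀ x, |f x| ≤ c) :
    Integrable f μ :=
  .of_bound hf.aestronglyMeasurable c (ae_of_all _ hfc)

lemma sum_ite_eq_card_mul_add {ι R : Type*} [Fintype ι] [DecidableEq ι] [CommRing R] (l : ι)
    (a b : R) : ∑ k, (if l = k then a else b) = Fintype.card ι * b + (a - b) := by
  have h : ∀ k, (if l = k then a else b) = b + if l = k then a - b else 0 := by
    intro k; split_ifs <;> ring
  simp only [h, sum_add_distrib, sum_ite_eq, mem_univ, if_true, sum_const, card_univ,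
    nsmul_eq_mul]

section ExchangeableFamily

variable {M : Type*} [MeasurableSpace M] {κ : (s : ℕ) → Measure (Fin s → M)}

/-- `κ s` is the joint law of any `s` of the repeated objects of one subject. -/
structure IsExchangeableConsistent (κ : (s : ℕ) → Measure (Fin s → M)) : Prop where
  map_comp_perm (s : ℕ) (σ : Equiv.Perm (Fin s)) : (κ s).map (fun x => x ∘ σ) = κ s
  map_castSucc (s : ℕ) : (κ (s + 1)).map (fun x (j : Fin s) => x j.castSucc) = κ s

namespace IsExchangeableConsistent

variable (hκ : IsExchangeableConsistent κ)
include hκ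

lemma map_castLE {t s : ℕ} (hts : t ≤ s) :
    (κ s).map (fun x (j : Fin t) => x (Fin.castLE hts j)) = κ t := by
  induction s, hts using Nat.le_induction with
  | base => simp
  | succ s hts ih =>
    rw [← ih, ← hκ.map_castSucc s, Measure.map_map (by fun_prop) (by fun_prop)]
    rfl

lemma map_comp_of_injective {t s : ℕ} {f : Fin t → Fin s} (hf : Function.Injective f) :
    (κ s).map (fun x => x ∘ f) = κ t := by
  have hts : t ≤ s := by simpa using Fintype.card_le_of_injective f hf
  obtain ⟨σ, hσ⟩ :=
    Equiv.Perm.exists_extending_pair (Fin.castLE hts) f (Fin.castLE_injective hts) hf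
  have hfac : (fun x : Fin s → M => x ∘ f) =
      (fun x j => x (Fin.castLE hts j)) ∘ (fun x => x ∘ σ) := by
    funext x j; simp [hσ]
  rw [hfac, ← Measure.map_map (by fun_prop) (by fun_prop), hκ.map_comp_perm,
    hκ.map_castLE hts]

lemma integral_comp_of_injective {t s : ℕ} {f : Fin t → Fin s} (hf : Function.Injective f)
    {g : (Fin t → M) → ℝ} (hg : Measurable g) :
    ∫ x, g (x ∘ f) ∂κ s = ∫ y, g y ∂κ t := by
  have hφ : Measurable fun x : Fin s → M => x ∘ f :=
    measurable_pi_lambda _ fun j => measurable_pi_apply (f j)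
  rw [← hκ.map_comp_of_injective hf, integral_map hφ.aemeasurable hg.aestronglyMeasurable]

lemma integral_eval {s : ℕ} (l : Fin s) {g : M → ℝ} (hg : Measurable g) :
    ∫ x, g (x l) ∂κ s = ∫ x, g (x 0) ∂κ 1 :=
  hκ.integral_comp_of_injective (f := ![l]) (Function.injective_of_subsingleton _)
    (g := fun y => g (y 0)) (hg.comp (measurable_pi_apply 0))

lemma integral_eval_pair {s : ℕ} {l k : Fin s} (hlk : l ≠ k) {g : M → M → ℝ}
    (hg : Measurable (Function.uncurry g)) :
    ∫ x, g (x l) (x k) ∂κ s = ∫ x, g (x 0) (x 1) ∂κ 2 := by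
  have hf : Function.Injective ![l, k] := by
    intro a b; fin_cases a <;> fin_cases b <;> simp [hlk, hlk.symm]
  have hφ : Measurable fun y : Fin 2 → M => (y 0, y 1) := by fun_prop
  exact hκ.integral_comp_of_injective hf (g := fun y => g (y 0) (y 1)) (hg.comp hφ)

variable [∀ s, IsProbabilityMeasure (κ s)] {f : M → ℝ} (hf : Measurable f) {c : ℝ}
  (hfc : ∀ y, |f y| ≤ c)
include hf hfc

lemma integral_sum_eval (s : ℕ) :
    ∫ x, ∑ l : Fin s, f (x l) ∂κ s = s * ∫ x, f (x 0) ∂κ 1 := by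
  have hint (l : Fin s) : Integrable (fun x => f (x l)) (κ s) :=
    .of_abs_le (hf.comp (measurable_pi_apply l)) fun x => hfc _
  rw [integral_finsetSum _ fun l _ => hint l]
  simp [hκ.integral_eval _ hf]

lemma integral_sum_eval_sq (s : ℕ) :
    ∫ x, (∑ l : Fin s, f (x l)) ^ 2 ∂κ s =
      s * ∫ x, f (x 0) ^ 2 ∂κ 1 + ((s : ℝ) ^ 2 - s) * ∫ x, f (x 0) * f (x 1) ∂κ 2 := by
  have hint (l k : Fin s) : Integrable (fun x => f (x l) * f (x k)) (κ s) :=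
    .of_abs_le (by fun_prop) (c := c * c) fun x => by
      rw [abs_mul]
      exact mul_le_mul (hfc _) (hfc _) (abs_nonneg _) ((abs_nonneg _).trans (hfc (x l)))
  have hterm (l k : Fin s) : ∫ x, f (x l) * f (x k) ∂κ s =
      if l = k then ∫ x, f (x 0) ^ 2 ∂κ 1 else ∫ x, f (x 0) * f (x 1) ∂κ 2 := by
    split_ifs with hlk
    · subst hlk
      simp_rw [← sq]
      exact hκ.integral_eval l (hf.pow_const 2)
    · exact hκ.integral_eval_pair hlk (g := fun y z => f y * f z) (by fun_prop)
  have hsq (x : Fin s → M) : (∑ l, f (x l)) ^ 2 = ∑ l, ∑ k, f (x l) * f (x k) := by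
    rw [sq, sum_mul_sum]
  simp_rw [hsq]
  rw [integral_finsetSum _ fun l _ => integrable_finsetSum _ fun k _ => hint l k]
  simp_rw [integral_finsetSum _ fun k _ => hint _ k, hterm, sum_ite_eq_card_mul_add]
  simp only [sum_const, card_univ, Fintype.card_fin, nsmul_eq_mul]
  ring

lemma cov_add_mul_cov (b : ℝ) :
    cov (κ 1) (fun x => f (x 0)) (fun x => f (x 0)) +
        (b - 1) * cov (κ 2) (fun x => f (x 0)) (fun x => f (x 1)) =
      ∫ x, f (x 0) ^ 2 ∂κ 1 + (b - 1) * ∫ x, f (x 0) * f (x 1) ∂κ 2 -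
        b * (∫ x, f (x 0) ∂κ 1) ^ 2 := by
  have hL2 {s : ℕ} (l : Fin s) : MemLp (fun x : Fin s → M => f (x l)) 2 (κ s) :=
    .of_bound (hf.comp (measurable_pi_apply l)).aestronglyMeasurable c
      (ae_of_all _ fun x => hfc _)
  change covariance _ _ _ + (b - 1) * covariance _ _ _ = _
  rw [covariance_eq_sub (hL2 0) (hL2 0), covariance_eq_sub (hL2 0) (hL2 1),
    hκ.integral_eval (1 : Fin 2) hf, hκ.integral_eval (0 : Fin 2) hf]
  simp only [Pi.mul_apply, sq]
  ring

end IsExchangeableConsistent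

end ExchangeableFamily

section ConvergenceInProbability

variable {Ω : ℕ → Type*} [∀ n, MeasurableSpace (Ω n)] {P : ∀ n, Measure (Ω n)}

/-- Unlike `MeasureTheory.TendstoInMeasure`, the underlying space may change with `n`. -/
def TendstoInProb (P : ∀ n, Measure (Ω n)) (X : ∀ n, Ω n → ℝ) (c : ℝ) : Prop :=
  ∀ ε : ℝ, 0 < ε → Tendsto (fun n => P n {ω | ε ≤ |X n ω - c|}) atTop (𝓝 0)

namespace TendstoInProb

variable {X Y Z : ∀ n, Ω n → ℝ} {a b c : ℝ}

lemma congr' (hX : TendstoInProb P X c) (h : ∀ᶠ n in atTop, ∀ ω, X n ω = Y n ω) :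
    TendstoInProb P Y c := by
  intro ε hε
  refine (tendsto_congr' ?_).mp (hX ε hε)
  filter_upwards [h] with n hn
  simp_rw [hn]

lemma of_tendsto {x : ℕ → ℝ} (hx : Tendsto x atTop (𝓝 c)) :
    TendstoInProb P (fun n _ => x n) c := by
  intro ε hε
  refine tendsto_const_nhds.congr' ?_
  filter_upwards [Metric.tendsto_nhds.mp hx ε hε] with n hn
  rw [Real.dist_eq] at hn
  simp [not_le.mpr hn]

lemma of_abs_le (hZ : TendstoInProb P Z 0) (h : ∀ n ω, |X n ω| ≤ Z n ω) :
    TendstoInProb P X 0 := by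
  intro ε hε
  refine tendsto_of_tendsto_of_tendsto_of_le_of_le tendsto_const_nhds (hZ ε hε)
    (fun n => zero_le) (fun n => measure_mono fun ω hω => ?_)
  simp only [Set.mem_ofPred_eq, sub_zero] at hω ⊢
  exact hω.trans ((h n ω).trans (le_abs_self _))

lemma comp₂ (hX : TendstoInProb P X a) (hY : TendstoInProb P Y b) {g : ℝ → ℝ → ℝ}
    (hg : ContinuousAt (Function.uncurry g) (a, b)) :
    TendstoInProb P (fun n ω => g (X n ω) (Y n ω)) (g a b) := by
  intro ε hε
  obtain ⟨δ, hδ, hgδ⟩ := Metric.continuousAt_iff.mp hg ε hε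
  have hsub (n : ℕ) : {ω | ε ≤ |g (X n ω) (Y n ω) - g a b|} ⊆
      {ω | δ ≤ |X n ω - a|} ∪ {ω | δ ≤ |Y n ω - b|} := by
    intro ω hω
    by_contra h
    simp only [Set.mem_union, Set.mem_ofPred_eq, not_or, not_le] at h
    have hclose := @hgδ (X n ω, Y n ω) (by
      rw [Prod.dist_eq, Real.dist_eq, Real.dist_eq]; exact max_lt h.1 h.2)
    rw [Real.dist_eq] at hclose
    exact (not_le.mpr hclose) hω
  refine tendsto_of_tendsto_of_tendsto_of_le_of_le tendsto_const_nhds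
    (by simpa using (hX δ hδ).add (hY δ hδ)) (fun n => zero_le)
    (fun n => (measure_mono (hsub n)).trans (measure_union_le _ _))

lemma add (hX : TendstoInProb P X a) (hY : TendstoInProb P Y b) :
    TendstoInProb P (fun n ω => X n ω + Y n ω) (a + b) :=
  hX.comp₂ hY continuous_add.continuousAt

lemma sub (hX : TendstoInProb P X a) (hY : TendstoInProb P Y b) :
    TendstoInProb P (fun n ω => X n ω - Y n ω) (a - b) :=
  hX.comp₂ hY continuous_sub.continuousAt

lemma mul (hX : TendstoInProb P X a) (hY : TendstoInProb P Y b) :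
    TendstoInProb P (fun n ω => X n ω * Y n ω) (a * b) :=
  hX.comp₂ hY continuous_mul.continuousAt

lemma of_sub_tendsto {e : ℕ → ℝ} (hX : TendstoInProb P (fun n ω => X n ω - e n) 0)
    (he : Tendsto e atTop (𝓝 c)) : TendstoInProb P X c := by
  simpa using hX.add (of_tendsto he)

lemma of_abs_sub_le (hY : TendstoInProb P Y c) (hZ : TendstoInProb P Z 0)
    (h : ∀ n ω, |X n ω - Y n ω| ≤ Z n ω) : TendstoInProb P X c := by
  simpa using hY.add (of_abs_le hZ h)

end TendstoInProb

end ConvergenceInProbability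

section Variance

variable {Ω : Type*} [MeasurableSpace Ω] {μ : Measure Ω} [IsProbabilityMeasure μ]

lemma variance_le_sq_of_abs_le {X : Ω → ℝ} (hX : Measurable X) {K : ℝ}
    (hK : ∀ ω, |X ω| ≤ K) : variance X μ ≤ K ^ 2 := by
  convert variance_le_sq_of_bounded (ae_of_all μ fun ω => abs_le.mp (hK ω)) hX.aemeasurable
    using 1
  ring

lemma variance_const_mul_sum_le {ι : Type*} [Fintype ι] {T : ι → Ω → ℝ}
    (hT : ∀ i, Measurable (T i)) (hindep : iIndepFun T μ) {K : ℝ}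
    (hK : ∀ i ω, |T i ω| ≤ K) (a : ℝ) :
    variance (fun ω => a * ∑ i, T i ω) μ ≤ a ^ 2 * (Fintype.card ι * K ^ 2) := by
  have hsum : (fun ω => ∑ i, T i ω) = ∑ i, T i := by ext; simp
  rw [variance_const_mul, hsum, IndepFun.variance_sum
    (fun i _ => .of_bound (hT i).aestronglyMeasurable K (ae_of_all _ (hK i)))
    (fun i _ j _ hij => hindep.indepFun hij)]
  gcongr
  calc ∑ i, variance (T i) μ ≤ ∑ _i : ι, K ^ 2 :=
        sum_le_sum fun i _ => variance_le_sq_of_abs_le (hT i) (hK i)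
    _ = Fintype.card ι * K ^ 2 := by simp

end Variance

theorem tendstoInProb_average_sub_integral {Ω : ℕ → Type*} [∀ n, MeasurableSpace (Ω n)]
    {P : ∀ n, Measure (Ω n)} [∀ n, IsProbabilityMeasure (P n)] {m : ℕ → ℕ} {N : ℕ → ℝ}
    (hN : Tendsto N atTop atTop) (hmN : ∀ n, (m n : ℝ) ≤ N n)
    {T : ∀ n, Fin (m n) → Ω n → ℝ} (hT : ∀ n i, Measurable (T n i))
    (hindep : ∀ n, iIndepFun (T n) (P n)) {K : ℝ} (hK : ∀ n i ω, |T n i ω| ≤ K) :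
    TendstoInProb P
      (fun n ω => (N n)⁻¹ * ∑ i, T n i ω - ∫ ω', (N n)⁻¹ * ∑ i, T n i ω' ∂P n) 0 := by
  intro ε hε
  have hchebyshev : ∀ᶠ n in atTop, P n {ω | ε ≤ |(N n)⁻¹ * ∑ i, T n i ω -
      ∫ ω', (N n)⁻¹ * ∑ i, T n i ω' ∂P n - 0|} ≤ ENNReal.ofReal (K ^ 2 / N n / ε ^ 2) := by
    filter_upwards [hN.eventually_gt_atTop 0] with n hn
    have hTL2 (i : Fin (m n)) : MemLp (T n i) 2 (P n) :=
      .of_bound (hT n i).aestronglyMeasurable K (ae_of_all _ (hK n i))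
    have hL2 : MemLp (fun ω => (N n)⁻¹ * ∑ i, T n i ω) 2 (P n) :=
      (memLp_finsetSum univ fun i _ => hTL2 i).const_mul (N n)⁻¹
    simp only [sub_zero]
    refine (meas_ge_le_variance_div_sq hL2 hε).trans (ENNReal.ofReal_le_ofReal ?_)
    gcongr
    calc variance (fun ω => (N n)⁻¹ * ∑ i, T n i ω) (P n)
        ≤ (N n)⁻¹ ^ 2 * (m n * K ^ 2) := by
          simpa using variance_const_mul_sum_le (hT n) (hindep n) (hK n) (N n)⁻¹
      _ ≤ (N n)⁻¹ ^ 2 * (N n * K ^ 2) := by gcongr; exact hmN n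
      _ = K ^ 2 / N n := by field_simp
  have hlim : Tendsto (fun n => ENNReal.ofReal (K ^ 2 / N n / ε ^ 2)) atTop (𝓝 0) := by
    simpa using ENNReal.tendsto_ofReal ((tendsto_const_nhds.div_atTop hN).div_const (ε ^ 2))
  exact tendsto_of_tendsto_of_tendsto_of_le_of_le' tendsto_const_nhds hlim
    (Eventually.of_forall fun n => zero_le) hchebyshev

section PooledStatistics

variable {m : ℕ} (r : Fin m → ℕ)

noncomputable def pooledMean (a : Fin m → ℝ) : ℝ :=
  (1 / ((∑ i, r i : ℕ) : ℝ)) * ∑ i, a i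

/-- With `aᵢ = Σ_l d²(w, Y_{il})` and `w = μ̂`, this is the estimator `σ̂²`. -/
noncomputable def sigmaHatSq (a : Fin m → ℝ) : ℝ :=
  pooledMean r (fun i => a i ^ 2) -
    ((∑ i, (r i : ℝ) ^ 2) / ((∑ i, r i : ℕ) : ℝ)) * pooledMean r a ^ 2

variable {r}

lemma pooledMean_sub (a b : Fin m → ℝ) :
    pooledMean r a - pooledMean r b = pooledMean r (a - b) := by
  simp only [pooledMean, Pi.sub_apply, sum_sub_distrib, mul_sub]

lemma pooledMean_natCast_mul (hr : (∑ i, r i) ≠ 0) (x : ℝ) :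
    pooledMean r (fun i => r i * x) = x := by
  have hN : ((∑ i, r i : ℕ) : ℝ) ≠ 0 := by exact_mod_cast hr
  rw [pooledMean, ← sum_mul, ← Nat.cast_sum]
  field_simp

lemma abs_pooledMean_le {a : Fin m → ℝ} {c : ℝ} (hc : 0 ≤ c) (ha : ∀ i, |a i| ≤ r i * c) :
    |pooledMean r a| ≤ c := by
  by_cases hr : (∑ i, r i) = 0
  · simp [pooledMean, hr, hc]
  calc |pooledMean r a| ≤ pooledMean r (fun i => r i * c) := by
        rw [pooledMean, pooledMean, abs_mul, abs_of_nonneg (by positivity)]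
        gcongr
        exact (abs_sum_le_sum_abs _ _).trans (sum_le_sum fun i _ => ha i)
    _ = c := pooledMean_natCast_mul hr c

lemma sum_sq_div_sum_le {C : ℕ} (hrC : ∀ i, r i ≤ C) :
    (∑ i, (r i : ℝ) ^ 2) / ((∑ i, r i : ℕ) : ℝ) ≤ C := by
  rw [div_eq_inv_mul, ← one_div]
  refine (le_abs_self _).trans (abs_pooledMean_le (Nat.cast_nonneg C) fun i => ?_)
  rw [abs_of_nonneg (by positivity), sq]
  exact mul_le_mul_of_nonneg_left (by exact_mod_cast hrC i) (Nat.cast_nonneg _)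

lemma abs_sigmaHatSq_sub_le {C : ℕ} (hrC : ∀ i, r i ≤ C) {a b : Fin m → ℝ} {K δ : ℝ}
    (hK : 0 ≤ K) (hδ : 0 ≤ δ) (ha : ∀ i, |a i| ≤ r i * K) (hb : ∀ i, |b i| ≤ r i * K)
    (hab : ∀ i, |a i - b i| ≤ r i * δ) :
    |sigmaHatSq r a - sigmaHatSq r b| ≤ 4 * C * K * δ := by
  have hsq (i : Fin m) : |a i ^ 2 - b i ^ 2| ≤ r i * (2 * C * K * δ) := by
    rw [sq_sub_sq, abs_mul]
    calc |a i + b i| * |a i - b i| ≤ (r i * K + r i * K) * (r i * δ) :=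
          mul_le_mul ((abs_add_le _ _).trans (add_le_add (ha i) (hb i))) (hab i) (abs_nonneg _)
            (by positivity)
      _ = r i * (2 * r i * K * δ) := by ring
      _ ≤ r i * (2 * C * K * δ) := by gcongr; exact_mod_cast hrC i
  have hmean_sq : |pooledMean r (fun i => a i ^ 2) - pooledMean r (fun i => b i ^ 2)| ≤
      2 * C * K * δ := by
    rw [pooledMean_sub]; exact abs_pooledMean_le (by positivity) hsq
  have hmean : |pooledMean r a - pooledMean r b| ≤ δ := by
    rw [pooledMean_sub]; exact abs_pooledMean_le hδ hab
  have hmean_add : |pooledMean r a + pooledMean r b| ≤ 2 * K := by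
    have := abs_pooledMean_le hK ha
    have := abs_pooledMean_le hK hb
    exact (abs_add_le _ _).trans (by linarith)
  have hB := sum_sq_div_sum_le hrC
  have hB0 : 0 ≤ (∑ i, (r i : ℝ) ^ 2) / ((∑ i, r i : ℕ) : ℝ) := by positivity
  rw [sigmaHatSq, sigmaHatSq, sub_sub_sub_comm, ← mul_sub, sq_sub_sq]
  calc _ ≤ 2 * C * K * δ + C * (2 * K * δ) := by
        refine (abs_sub _ _).trans (add_le_add hmean_sq ?_)
        rw [abs_mul, abs_of_nonneg hB0, abs_mul]
        gcongr
    _ = 4 * C * K * δ := by ring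

end PooledStatistics

section MetricRows

variable {M : Type*} [PseudoMetricSpace M] {D : ℝ}

lemma abs_dist_sq_sub_dist_sq_le (hD : ∀ x y : M, dist x y ≤ D) (w w' y : M) :
    |dist w y ^ 2 - dist w' y ^ 2| ≤ 2 * D * dist w w' := by
  rw [sq_sub_sq, abs_mul, abs_of_nonneg (by positivity)]
  calc (dist w y + dist w' y) * |dist w y - dist w' y| ≤ (D + D) * dist w w' :=
        mul_le_mul (add_le_add (hD _ _) (hD _ _)) (abs_dist_sub_le w w' y) (abs_nonneg _)
          (by linarith [dist_nonneg.trans (hD w y)])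
    _ = 2 * D * dist w w' := by ring

lemma abs_sigmaHatSq_sub_le_dist (hD : ∀ x y : M, dist x y ≤ D) {m : ℕ} {r : Fin m → ℕ}
    {C : ℕ} (hrC : ∀ i, r i ≤ C) (y : ∀ i, Fin (r i) → M) (w w' : M) :
    |sigmaHatSq r (fun i => ∑ l, dist w (y i l) ^ 2) -
        sigmaHatSq r (fun i => ∑ l, dist w' (y i l) ^ 2)| ≤ 8 * C * D ^ 3 * dist w w' := by
  have hD0 : 0 ≤ D := dist_nonneg.trans (hD w w)
  have hrow (v : M) (i : Fin m) : |∑ l, dist v (y i l) ^ 2| ≤ r i * D ^ 2 := by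
    rw [abs_of_nonneg (by positivity)]
    exact (sum_le_sum fun l _ => pow_le_pow_left₀ dist_nonneg (hD _ _) 2).trans (by simp)
  have hdiff (i : Fin m) : |∑ l, dist w (y i l) ^ 2 - ∑ l, dist w' (y i l) ^ 2| ≤
      r i * (2 * D * dist w w') := by
    rw [← sum_sub_distrib]
    exact (abs_sum_le_sum_abs _ _).trans
      ((sum_le_sum fun l _ => abs_dist_sq_sub_dist_sq_le hD _ _ _).trans (by simp))
  calc _ ≤ 4 * C * D ^ 2 * (2 * D * dist w w') :=
        abs_sigmaHatSq_sub_le hrC (by positivity) (by positivity) (hrow w) (hrow w') hdiff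
    _ = 8 * C * D ^ 3 * dist w w' := by ring

end MetricRows

lemma integral_pooledMean {Ω : Type*} [MeasurableSpace Ω] {μ : Measure Ω} {m : ℕ}
    (r : Fin m → ℕ) {a : Fin m → Ω → ℝ} (ha : ∀ i, Integrable (a i) μ) :
    ∫ ω, pooledMean r (fun i => a i ω) ∂μ = pooledMean r (fun i => ∫ ω, a i ω ∂μ) := by
  simp only [pooledMean]
  rw [integral_const_mul, integral_finsetSum _ fun i _ => ha i]

section Consistency

variable {Ω : ℕ → Type*} [∀ n, MeasurableSpace (Ω n)] {P : ∀ n, Measure (Ω n)}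
  [∀ n, IsProbabilityMeasure (P n)] {m : ℕ → ℕ} {r : ∀ n, Fin (m n) → ℕ}
  {a : ∀ n, Fin (m n) → Ω n → ℝ} {K : ℝ}

lemma tendstoInProb_pooledMean (hr : ∀ n i, 1 ≤ r n i)
    (hN : Tendsto (fun n => ∑ i, r n i) atTop atTop) (ha : ∀ n i, Measurable (a n i))
    (hindep : ∀ n, iIndepFun (a n) (P n)) (hK : ∀ n i ω, |a n i ω| ≤ K) {c : ℝ}
    (hc : Tendsto (fun n => pooledMean (r n) fun i => ∫ ω, a n i ω ∂P n) atTop (𝓝 c)) :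
    TendstoInProb P (fun n ω => pooledMean (r n) fun i => a n i ω) c := by
  have hmN (n : ℕ) : (m n : ℝ) ≤ ((∑ i, r n i : ℕ) : ℝ) := by
    have : m n ≤ ∑ i, r n i := by
      simpa using sum_le_sum (s := univ) fun i _ => hr n i
    exact_mod_cast this
  have hwlln := tendstoInProb_average_sub_integral (tendsto_natCast_atTop_atTop.comp hN) hmN
    ha hindep hK
  refine (hwlln.congr' (Eventually.of_forall fun n ω => ?_)).of_sub_tendsto hc
  rw [← integral_pooledMean _ fun i => .of_abs_le (ha n i) (hK n i)]
  simp only [pooledMean, one_div, Function.comp_apply]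

theorem tendstoInProb_sigmaHatSq (hr : ∀ n i, 1 ≤ r n i)
    (hN : Tendsto (fun n => ∑ i, r n i) atTop atTop) {ar : ℝ}
    (har : Tendsto (fun n => (∑ i, (r n i : ℝ) ^ 2) / ((∑ i, r n i : ℕ) : ℝ)) atTop (𝓝 ar))
    (ha : ∀ n i, Measurable (a n i)) (hindep : ∀ n, iIndepFun (a n) (P n))
    (hK : ∀ n i ω, |a n i ω| ≤ K) {m₁ m₂ m₁₁ : ℝ}
    (h₁ : ∀ n i, ∫ ω, a n i ω ∂P n = r n i * m₁)
    (h₂ : ∀ n i, ∫ ω, a n i ω ^ 2 ∂P n = r n i * m₂ + ((r n i : ℝ) ^ 2 - r n i) * m₁₁) :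
    TendstoInProb P (fun n ω => sigmaHatSq (r n) fun i => a n i ω)
      (m₂ + (ar - 1) * m₁₁ - ar * m₁ ^ 2) := by
  have hpos : ∀ᶠ n in atTop, (∑ i, r n i) ≠ 0 :=
    (hN.eventually_gt_atTop 0).mono fun n hn => hn.ne'
  have hmean : TendstoInProb P (fun n ω => pooledMean (r n) fun i => a n i ω) m₁ := by
    refine tendstoInProb_pooledMean hr hN ha hindep hK (tendsto_const_nhds.congr' ?_)
    filter_upwards [hpos] with n hn
    simp_rw [h₁, pooledMean_natCast_mul hn]
  have hK₂ (n : ℕ) (i : Fin (m n)) (ω : Ω n) : |a n i ω ^ 2| ≤ K ^ 2 := by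
    rw [abs_pow]
    exact pow_le_pow_left₀ (abs_nonneg _) (hK n i ω) 2
  have hmean_sq : TendstoInProb P (fun n ω => pooledMean (r n) fun i => a n i ω ^ 2)
      (m₂ + (ar - 1) * m₁₁) := by
    refine tendstoInProb_pooledMean hr hN (fun n i => (ha n i).pow_const 2)
      (fun n => (hindep n).comp (fun _ x => x ^ 2) fun _ => measurable_id.pow_const 2) hK₂
      ((tendsto_const_nhds.add ((har.sub_const 1).mul_const m₁₁)).congr' ?_)
    filter_upwards [hpos] with n hn
    have hN : ((∑ i, r n i : ℕ) : ℝ) ≠ 0 := by exact_mod_cast hn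
    simp_rw [h₂, pooledMean, sum_add_distrib, ← sum_mul, sum_sub_distrib, ← Nat.cast_sum]
    field_simp
  have := hmean_sq.sub ((TendstoInProb.of_tendsto har).mul (hmean.mul hmean))
  simpa [sigmaHatSq, sq] using this

end Consistency

theorem tendstoInProb_sigmaHatSq_of_exchangeable {M : Type*} [MeasurableSpace M]
    {Ω : ℕ → Type*} [∀ n, MeasurableSpace (Ω n)] {P : ∀ n, Measure (Ω n)}
    [∀ n, IsProbabilityMeasure (P n)] {m : ℕ → ℕ} {r : ∀ n, Fin (m n) → ℕ}
    (hr : ∀ n i, 1 ≤ r n i) {C : ℕ} (hrC : ∀ n i, r n i ≤ C)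
    (hN : Tendsto (fun n => ∑ i, r n i) atTop atTop) {ar : ℝ}
    (har : Tendsto (fun n => (∑ i, (r n i : ℝ) ^ 2) / ((∑ i, r n i : ℕ) : ℝ)) atTop (𝓝 ar))
    {Y : ∀ n (i : Fin (m n)), Fin (r n i) → Ω n → M} (hY : ∀ n i l, Measurable (Y n i l))
    (hindep : ∀ n, iIndepFun (fun i ω l => Y n i l ω) (P n))
    {κ : (s : ℕ) → Measure (Fin s → M)} [∀ s, IsProbabilityMeasure (κ s)]
    (hκ : IsExchangeableConsistent κ)
    (hlaw : ∀ n i, (P n).map (fun ω l => Y n i l ω) = κ (r n i))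
    {f : M → ℝ} (hf : Measurable f) {c : ℝ} (hfc : ∀ y, |f y| ≤ c) :
    TendstoInProb P (fun n ω => sigmaHatSq (r n) fun i => ∑ l, f (Y n i l ω))
      (∫ x, f (x 0) ^ 2 ∂κ 1 + (ar - 1) * ∫ x, f (x 0) * f (x 1) ∂κ 2 -
        ar * (∫ x, f (x 0) ∂κ 1) ^ 2) := by
  have hsum (s : ℕ) : Measurable fun x : Fin s → M => ∑ l, f (x l) :=
    Finset.measurable_sum _ fun l _ => hf.comp (measurable_pi_apply l)
  have hrow (n : ℕ) (i : Fin (m n)) {g : (Fin (r n i) → M) → ℝ} (hg : Measurable g) :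
      ∫ ω, g (fun l => Y n i l ω) ∂P n = ∫ x, g x ∂κ (r n i) := by
    rw [← hlaw, integral_map (measurable_pi_lambda _ (hY n i)).aemeasurable
      hg.aestronglyMeasurable]
  refine tendstoInProb_sigmaHatSq hr hN har (K := C * |c|)
    (fun n i => (hsum _).comp (measurable_pi_lambda _ (hY n i)))
    (fun n => (hindep n).comp _ fun _ => hsum _) (fun n i ω => ?_)
    (fun n i => (hrow n i (hsum _)).trans (hκ.integral_sum_eval hf hfc _))
    (fun n i => (hrow n i ((hsum _).pow_const 2)).trans (hκ.integral_sum_eval_sq hf hfc _))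
  calc |∑ l, f (Y n i l ω)| ≤ ∑ _l : Fin (r n i), |c| :=
        (abs_sum_le_sum_abs _ _).trans (sum_le_sum fun l _ => (hfc _).trans (le_abs_self c))
    _ ≤ C * |c| := by
        simp only [sum_const, card_univ, Fintype.card_fin, nsmul_eq_mul]
        gcongr
        exact_mod_cast hrC n i

theorem sigma_hat_consistent_general
    (M : Type) [MetricSpace M] [MeasurableSpace M] [BorelSpace M]
    (hMbdd : Bornology.IsBounded (Set.univ : Set M))
    (Ω : ℕ → Type) [∀ n, MeasurableSpace (Ω n)]
    (P : ∀ n, Measure (Ω n)) [∀ n, IsProbabilityMeasure (P n)]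
    (m : ℕ → ℕ) (r : (n : ℕ) → Fin (m n) → ℕ) (hr : ∀ n i, 1 ≤ r n i)
    -- Condition 2: bounded numbers of repeats, and N_j → ∞
    (C₀ : ℕ) (hrbdd : ∀ n i, r n i ≤ C₀)
    (hN : Tendsto (fun n => ∑ i, r n i) atTop atTop)
    (Y : (n : ℕ) → (i : Fin (m n)) → Fin (r n i) → Ω n → M)
    (hYmeas : ∀ n i l, Measurable (Y n i l))
    -- observations from different subjects are independent
    (hindep : ∀ n, iIndepFun
      (fun (i : Fin (m n)) (ω : Ω n) (l : Fin (r n i)) => Y n i l ω) (P n))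
    -- within-subject joint laws: exchangeable, identical across subjects and stages
    (κ : (s : ℕ) → Measure (Fin s → M)) (hκ : ∀ s, IsProbabilityMeasure (κ s))
    (hexch : ∀ (s : ℕ) (σ : Equiv.Perm (Fin s)), (κ s).map (fun x => x ∘ σ) = κ s)
    (hconsis : ∀ s : ℕ, (κ (s+1)).map (fun x (j : Fin s) => x j.castSucc) = κ s)
    (hlaw : ∀ n i, (P n).map (fun ω (l : Fin (r n i)) => Y n i l ω) = κ (r n i))
    (μ : M)
    (μhat : (n : ℕ) → Ω n → M)
    -- consistency of the sample Fréchet mean (implied by Condition 1)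
    (hμhatcons : ∀ ε : ℝ, 0 < ε →
      Tendsto (fun n => P n {ω : Ω n | ε ≤ dist (μhat n ω) μ}) atTop (nhds 0))
    -- `a_r = lim Σ_i r_i² / N_j` exists
    (ar : ℝ)
    (har : Tendsto (fun n => (∑ i : Fin (m n), ((r n i : ℝ)) ^ 2) / ((∑ i, r n i : ℕ) : ℝ))
      atTop (nhds ar)) :
    -- conclusion: `σ̂_j²` is consistent for `σ_j²`
    ∀ ε : ℝ, 0 < ε →
      Tendsto (fun n => P n {ω : Ω n | ε ≤
        |((1 / ((∑ i, r n i : ℕ) : ℝ)) *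
            ∑ i : Fin (m n),
              (∑ l : Fin (r n i), dist (μhat n ω) (Y n i l ω) ^ 2) ^ 2
          - ((∑ i : Fin (m n), ((r n i : ℝ)) ^ 2) / ((∑ i, r n i : ℕ) : ℝ)) *
              ((1 / ((∑ i, r n i : ℕ) : ℝ)) *
                ∑ i : Fin (m n), ∑ l : Fin (r n i),
                  dist (μhat n ω) (Y n i l ω) ^ 2) ^ 2)
          - (cov (κ 1) (fun x => dist μ (x 0) ^ 2) (fun x => dist μ (x 0) ^ 2)
              + (ar - 1) *
                cov (κ 2) (fun x => dist μ (x 0) ^ 2) (fun x => dist μ (x 1) ^ 2))|})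
        atTop (nhds 0) := by
  obtain ⟨D, hD⟩ : ∃ D, ∀ x y : M, dist x y ≤ D := by
    obtain ⟨D, hD⟩ := Metric.isBounded_iff.mp hMbdd
    exact ⟨D, fun x y => hD trivial trivial⟩
  have : ∀ s, IsProbabilityMeasure (κ s) := hκ
  have hκ' : IsExchangeableConsistent κ := ⟨hexch, hconsis⟩
  have hf : Measurable fun y => dist μ y ^ 2 := by fun_prop
  have hfD (y : M) : |dist μ y ^ 2| ≤ D ^ 2 := by
    rw [abs_of_nonneg (sq_nonneg _)]
    exact pow_le_pow_left₀ dist_nonneg (hD μ y) 2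
  have hdist : TendstoInProb P (fun n ω => dist (μhat n ω) μ) 0 := fun ε hε => by
    simpa using hμhatcons ε hε
  have hlip : TendstoInProb P (fun n ω => 8 * C₀ * D ^ 3 * dist (μhat n ω) μ) 0 := by
    simpa using (TendstoInProb.of_tendsto tendsto_const_nhds).mul hdist
  rw [hκ'.cov_add_mul_cov hf hfD ar]
  exact (tendstoInProb_sigmaHatSq_of_exchangeable hr hrbdd hN har hYmeas hindep hκ' hlaw hf
    hfD).of_abs_sub_le hlip fun n ω =>
      abs_sigmaHatSq_sub_le_dist hD (hrbdd n) (fun i l => Y n i l ω) _ _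

/-- **Consistency of the variance estimator `σ̂_j²` (Theorem 1, first part).**
For a single group of subjects carrying exchangeable repeated random objects in a bounded
metric space, under Condition 1 (existence, uniqueness and separation of the Fréchet means),
Condition 2 (bounded numbers of repeats and `N_j → ∞`), existence of
`a_r = lim Σ_i r_i²/N_j`, and consistency of the sample Fréchet mean,
the estimator
`σ̂_j² = (1/N_j) Σ_i (Σ_l d²(μ̂_j,Y_{il}))² − (Σ_i r_i²/N_j)·V̂_j²`
converges in probability to
`σ_j² = Var(d²(μ_j,Y_{il})) + (a_r − 1)·Cov(d²(μ_j,Y_{il}), d²(μ_j,Y_{ik}))`, `l ≠ k`. -/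
theorem sigma_hat_consistent
    (M : Type) [MetricSpace M] [MeasurableSpace M] [BorelSpace M]
    (hMbdd : Bornology.IsBounded (Set.univ : Set M))
    (Ω : ℕ → Type) [∀ n, MeasurableSpace (Ω n)]
    (P : ∀ n, Measure (Ω n)) [∀ n, IsProbabilityMeasure (P n)]
    (m : ℕ → ℕ) (r : (n : ℕ) → Fin (m n) → ℕ) (hr : ∀ n i, 1 ≤ r n i)
    -- Condition 2: bounded numbers of repeats, and N_j → ∞
    (C₀ : ℕ) (hrbdd : ∀ n i, r n i ≤ C₀)
    (hN : Tendsto (fun n => ∑ i, r n i) atTop atTop)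
    (Y : (n : ℕ) → (i : Fin (m n)) → Fin (r n i) → Ω n → M)
    (hYmeas : ∀ n i l, Measurable (Y n i l))
    -- observations from different subjects are independent
    (hindep : ∀ n, iIndepFun
      (fun (i : Fin (m n)) (ω : Ω n) (l : Fin (r n i)) => Y n i l ω) (P n))
    -- within-subject joint laws: exchangeable, identical across subjects and stages
    (κ : (s : ℕ) → Measure (Fin s → M)) (hκ : ∀ s, IsProbabilityMeasure (κ s))
    (hexch : ∀ (s : ℕ) (σ : Equiv.Perm (Fin s)), (κ s).map (fun x => x ∘ σ) = κ s)
    (hconsis : ∀ s : ℕ, (κ (s+1)).map (fun x (j : Fin s) => x j.castSucc) = κ s)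
    (hlaw : ∀ n i, (P n).map (fun ω (l : Fin (r n i)) => Y n i l ω) = κ (r n i))
    -- Condition 1 (population part)
    (μ : M)
    (hμmin : ∀ w : M, (∫ x, dist μ (x 0) ^ 2 ∂(κ 1)) ≤ ∫ x, dist w (x 0) ^ 2 ∂(κ 1))
    (hμuniq : ∀ w : M, (∀ w' : M,
      (∫ x, dist w (x 0) ^ 2 ∂(κ 1)) ≤ ∫ x, dist w' (x 0) ^ 2 ∂(κ 1)) → w = μ)
    (hsep : ∀ ε : ℝ, 0 < ε → ∃ c : ℝ, (∫ x, dist μ (x 0) ^ 2 ∂(κ 1)) < c ∧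
      ∀ w : M, ε < dist w μ → c ≤ ∫ x, dist w (x 0) ^ 2 ∂(κ 1))
    -- Condition 1 (sample part)
    (μhat : (n : ℕ) → Ω n → M) (hμhatmeas : ∀ n, Measurable (μhat n))
    (hμhatmin : ∀ n (ω : Ω n) (w : M),
      (1 / ((∑ i, r n i : ℕ) : ℝ)) *
          ∑ i : Fin (m n), ∑ l : Fin (r n i), dist (μhat n ω) (Y n i l ω) ^ 2
        ≤ (1 / ((∑ i, r n i : ℕ) : ℝ)) *
            ∑ i : Fin (m n), ∑ l : Fin (r n i), dist w (Y n i l ω) ^ 2)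
    (hμhatuniq : ∀ n (ω : Ω n) (w : M), (∀ w' : M,
      (1 / ((∑ i, r n i : ℕ) : ℝ)) *
          ∑ i : Fin (m n), ∑ l : Fin (r n i), dist w (Y n i l ω) ^ 2
        ≤ (1 / ((∑ i, r n i : ℕ) : ℝ)) *
            ∑ i : Fin (m n), ∑ l : Fin (r n i), dist w' (Y n i l ω) ^ 2) → w = μhat n ω)
    -- consistency of the sample Fréchet mean (implied by Condition 1)
    (hμhatcons : ∀ ε : ℝ, 0 < ε →
      Tendsto (fun n => P n {ω : Ω n | ε ≤ dist (μhat n ω) μ}) atTop (nhds 0))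
    -- `a_r = lim Σ_i r_i² / N_j` exists
    (ar : ℝ)
    (har : Tendsto (fun n => (∑ i : Fin (m n), ((r n i : ℝ)) ^ 2) / ((∑ i, r n i : ℕ) : ℝ))
      atTop (nhds ar)) :
    -- conclusion: `σ̂_j²` is consistent for `σ_j²`
    ∀ ε : ℝ, 0 < ε →
      Tendsto (fun n => P n {ω : Ω n | ε ≤
        |((1 / ((∑ i, r n i : ℕ) : ℝ)) *
            ∑ i : Fin (m n),
              (∑ l : Fin (r n i), dist (μhat n ω) (Y n i l ω) ^ 2) ^ 2
          - ((∑ i : Fin (m n), ((r n i : ℝ)) ^ 2) / ((∑ i, r n i : ℕ) : ℝ)) *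
              ((1 / ((∑ i, r n i : ℕ) : ℝ)) *
                ∑ i : Fin (m n), ∑ l : Fin (r n i),
                  dist (μhat n ω) (Y n i l ω) ^ 2) ^ 2)
          - (cov (κ 1) (fun x => dist μ (x 0) ^ 2) (fun x => dist μ (x 0) ^ 2)
              + (ar - 1) *
                cov (κ 2) (fun x => dist μ (x 0) ^ 2) (fun x => dist μ (x 1) ^ 2))|})
        atTop (nhds 0) :=
  sigma_hat_consistent_general M hMbdd Ω P m r hr C₀ hrbdd hN Y hYmeas hindep κ hκ hexch hconsis
    hlaw μ μhat hμhatcons ar har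
end

section
/- (Massart's lemma for clustered Rademacher complexity.) Let x_{ij}, i = 1,…,n, j = 1,…,r_i, be fixed points, N = Σ_i r_i, and let F be a finite class of functions with sup_{x,f∈F} |f(x)| ≤ B. Then the empirical clustered Rademacher complexity satisfies E_ξ[ max_{f∈F} (1/N)·Σ_{i=1}^n ξ_i·Σ_{j=1}^{r_i} f(x_{ij}) ] ≤ (B/N)·√( 2·log|F|·Σ_{i=1}^n r_i² ), where ξ_1,…,ξ_n are i.i.d. Rademacher random variables. -/
open MeasureTheory ProbabilityTheory Finset

/-- The Rademacher distribution on `ℝ`: `±1` with probability `1/2` each. -/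
noncomputable def radMeasure : Measure ℝ :=
  (2 : ENNReal)⁻¹ • Measure.dirac (1 : ℝ) + (2 : ENNReal)⁻¹ • Measure.dirac (-1 : ℝ)

/-!
A Rademacher sign is sub-Gaussian with variance proxy `1` (its moment generating function is
`cosh t ≤ exp (t² / 2)`), so by independence the cluster sum `Z_f = Σ_i ξ_i Σ_j f(x_ij)` is
sub-Gaussian with proxy `c = B² Σ_i r_i²`. For finitely many sub-Gaussian variables, Jensen and a
union bound give `exp (t E[max_f Z_f]) ≤ E[max_f exp (t Z_f)] ≤ |F| exp (c t² / 2)`, and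
optimising over `t > 0` yields `E[max_f Z_f] ≤ √(2 c log |F|)`.
-/

open Real
open scoped NNReal

lemma integrable_radMeasure (g : ℝ → ℝ) : Integrable g radMeasure :=
  ((integrable_dirac (by simp)).smul_measure (by simp)).add_measure
    ((integrable_dirac (by simp)).smul_measure (by simp))

lemma integral_radMeasure (g : ℝ → ℝ) : ∫ y, g y ∂radMeasure = (g 1 + g (-1)) / 2 := by
  rw [radMeasure, integral_add_measure ((integrable_dirac (by simp)).smul_measure (by simp))
      ((integrable_dirac (by simp)).smul_measure (by simp)),
    integral_smul_measure, integral_smul_measure, integral_dirac, integral_dirac]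
  simp [ENNReal.toReal_inv]
  ring

lemma hasSubgaussianMGF_id_radMeasure : HasSubgaussianMGF id 1 radMeasure where
  integrable_exp_mul t := integrable_radMeasure _
  mgf_le t := by
    rw [mgf, integral_radMeasure]
    simpa [← cosh_eq] using cosh_le_exp_half_sq t

lemma ProbabilityTheory.HasSubgaussianMGF.mono {Ω : Type*} [MeasurableSpace Ω] {μ : Measure Ω}
    {X : Ω → ℝ} {c c' : ℝ≥0} (h : HasSubgaussianMGF X c μ) (hc : c ≤ c') :
    HasSubgaussianMGF X c' μ where
  integrable_exp_mul := h.integrable_exp_mul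
  mgf_le t := (h.mgf_le t).trans (by gcongr)

lemma le_sqrt_of_forall_pos_mul_le {I L S : ℝ} (hS : 0 ≤ S)
    (h : ∀ t > 0, t * I ≤ L + S * t ^ 2 / 2) : I ≤ √(2 * S * L) := by
  by_contra! hlt
  have hI : 0 < I := (sqrt_nonneg _).trans_lt hlt
  rcases hS.eq_or_lt with rfl | hS
  · have := h ((|L| + 1) / I) (by positivity)
    rw [div_mul_cancel₀ _ hI.ne'] at this
    linarith [le_abs_self L]
  · have := h (I / S) (div_pos hI hS)
    have hsq : I ^ 2 ≤ 2 * S * L := by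
      field_simp at this
      nlinarith
    exact hlt.not_ge ((le_sqrt' hI).2 hsq)

section

variable {Ω ι : Type*} [MeasurableSpace Ω] {μ : Measure Ω}

lemma hasSubgaussianMGF_sum_mul_of_map_eq_radMeasure {ξ : ι → Ω → ℝ}
    (hξ : ∀ i, AEMeasurable (ξ i) μ) (hξlaw : ∀ i, μ.map (ξ i) = radMeasure)
    (hξindep : iIndepFun ξ μ) (s : Finset ι) (a : ι → ℝ) :
    HasSubgaussianMGF (fun ω ↦ ∑ i ∈ s, ξ i ω * a i) (∑ i ∈ s, ‖a i‖₊ ^ 2) μ := by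
  refine HasSubgaussianMGF.sum_of_iIndepFun
    (hξindep.comp (fun i y ↦ y * a i) fun i ↦ measurable_mul_const _) fun i _ ↦ ?_
  have hξi : HasSubgaussianMGF (ξ i) 1 μ :=
    (HasSubgaussianMGF.id_map_iff (hξ i)).1 (hξlaw i ▸ hasSubgaussianMGF_id_radMeasure)
  -- `const_mul` states its proxy as `⟨a ^ 2, _⟩ * c`, a term of the subtype `{r // 0 ≤ r}`,
  -- so the coercion has to be unfolded by hand.
  have hc : (⟨a i ^ 2, sq_nonneg _⟩ : ℝ≥0) * 1 = ‖a i‖₊ ^ 2 := by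
    rw [mul_one]; exact Subtype.ext (show a i ^ 2 = ((‖a i‖₊ ^ 2 : ℝ≥0) : ℝ) by simp)
  exact hc ▸ (hξi.const_mul (a i)).congr (ae_of_all _ fun ω ↦ mul_comm _ _)

lemma integrable_finset_sup' {s : Finset ι} (hs : s.Nonempty) {X : ι → Ω → ℝ}
    (h : ∀ i ∈ s, Integrable (X i) μ) : Integrable (fun ω ↦ s.sup' hs fun i ↦ X i ω) μ := by
  simp_rw [← Finset.sup'_apply]
  exact Finset.sup'_induction hs X (p := fun Y : Ω → ℝ ↦ Integrable Y μ)
    (fun _ hf _ hg ↦ hf.sup hg) h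

lemma integral_sup'_const_mul {s : Finset ι} (hs : s.Nonempty) (X : ι → Ω → ℝ)
    {c : ℝ} (hc : 0 ≤ c) :
    ∫ ω, s.sup' hs (fun i ↦ c * X i ω) ∂μ = c * ∫ ω, s.sup' hs (fun i ↦ X i ω) ∂μ := by
  rw [← integral_const_mul]
  congr 1 with ω
  exact (apply_sup'_eq_sup'_comp hs (c * ·) fun a b ↦ mul_max_of_nonneg a b hc).symm

lemma hasSubgaussianMGF_sum_mul_sum_of_abs_le {E : Type*} [Fintype ι] {r : ι → ℕ}
    (x : (i : ι) → Fin (r i) → E) {ξ : ι → Ω → ℝ} (hξ : ∀ i, AEMeasurable (ξ i) μ)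
    (hξlaw : ∀ i, μ.map (ξ i) = radMeasure) (hξindep : iIndepFun ξ μ) {f : E → ℝ} {B : ℝ}
    (hB : ∀ y, |f y| ≤ B) :
    HasSubgaussianMGF (fun ω ↦ ∑ i, ξ i ω * ∑ j, f (x i j))
      (‖B‖₊ ^ 2 * ∑ i, (r i : ℝ≥0) ^ 2) μ := by
  have hcluster (i : ι) : ‖∑ j, f (x i j)‖₊ ≤ ‖B‖₊ * r i := calc
    _ ≤ ∑ _j : Fin (r i), ‖B‖₊ := nnnorm_sum_le_of_le _ fun j _ ↦ by
        simpa [← NNReal.coe_le_coe] using (hB _).trans (le_abs_self B)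
    _ = ‖B‖₊ * r i := by simp [mul_comm]
  refine (hasSubgaussianMGF_sum_mul_of_map_eq_radMeasure hξ hξlaw hξindep _ _).mono ?_
  rw [mul_sum]
  gcongr with i
  rw [← mul_pow]
  gcongr
  exact hcluster i

variable [IsProbabilityMeasure μ] {s : Finset ι} {X : ι → Ω → ℝ} {c : ℝ≥0}

lemma mul_integral_sup'_le_of_hasSubgaussianMGF (hs : s.Nonempty)
    (h : ∀ i ∈ s, HasSubgaussianMGF (X i) c μ) {t : ℝ} (ht : 0 ≤ t) :
    t * ∫ ω, s.sup' hs (fun i ↦ X i ω) ∂μ ≤ log #s + c * t ^ 2 / 2 := by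
  set Y : Ω → ℝ := fun ω ↦ s.sup' hs fun i ↦ X i ω
  have hexpY (ω : Ω) : exp (t * Y ω) = s.sup' hs fun i ↦ exp (t * X i ω) :=
    apply_sup'_eq_sup'_comp hs (fun y ↦ exp (t * y))
      fun _ _ ↦ (exp_monotone.comp (monotone_mul_left_of_nonneg ht)).map_max
  have hYint : Integrable Y μ := integrable_finset_sup' hs fun i hi ↦ (h i hi).integrable
  have hexpYint : Integrable (fun ω ↦ exp (t * Y ω)) μ := by
    simp_rw [hexpY]
    exact integrable_finset_sup' hs fun i hi ↦ (h i hi).integrable_exp_mul t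
  have jensen : exp (t * ∫ ω, Y ω ∂μ) ≤ ∫ ω, exp (t * Y ω) ∂μ := by
    rw [← integral_const_mul]
    exact convexOn_exp.map_integral_le continuous_exp.continuousOn isClosed_univ
      (ae_of_all _ fun _ ↦ Set.mem_univ _) (hYint.const_mul t) hexpYint
  have union_bound : ∫ ω, exp (t * Y ω) ∂μ ≤ #s * exp (c * t ^ 2 / 2) := calc
    _ ≤ ∫ ω, ∑ i ∈ s, exp (t * X i ω) ∂μ :=
        integral_mono hexpYint (integrable_finsetSum _ fun i hi ↦ (h i hi).integrable_exp_mul t)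
          fun ω ↦ (hexpY ω).trans_le <|
            sup'_le hs _ fun i hi ↦ single_le_sum (fun j _ ↦ (exp_pos (t * X j ω)).le) hi
    _ = ∑ i ∈ s, mgf (X i) μ t :=
        integral_finsetSum _ fun i hi ↦ (h i hi).integrable_exp_mul t
    _ ≤ ∑ i ∈ s, exp (c * t ^ 2 / 2) := sum_le_sum fun i hi ↦ (h i hi).mgf_le t
    _ = #s * exp (c * t ^ 2 / 2) := by rw [sum_const, nsmul_eq_mul]
  have hcard : (0 : ℝ) < #s := by exact_mod_cast hs.card_pos
  calc t * ∫ ω, Y ω ∂μ = log (exp (t * ∫ ω, Y ω ∂μ)) := (log_exp _).symm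
    _ ≤ log (#s * exp (c * t ^ 2 / 2)) := log_le_log (exp_pos _) (jensen.trans union_bound)
    _ = log #s + c * t ^ 2 / 2 := by rw [log_mul hcard.ne' (exp_pos _).ne', log_exp]


theorem integral_sup'_le_sqrt_of_hasSubgaussianMGF (hs : s.Nonempty)
    (h : ∀ i ∈ s, HasSubgaussianMGF (X i) c μ) :
    ∫ ω, s.sup' hs (fun i ↦ X i ω) ∂μ ≤ √(2 * c * log #s) :=
  le_sqrt_of_forall_pos_mul_le c.2 fun _ ht ↦ mul_integral_sup'_le_of_hasSubgaussianMGF hs h ht.le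

end

/-- **Massart's lemma for clustered Rademacher complexity.**
Let `x_{ij}` (`i = 1,…,n`, `j = 1,…,r_i`) be fixed points, `N = Σ_i r_i`, and `F` a finite
nonempty class of functions with `|f| ≤ B` everywhere.  If `ξ_1,…,ξ_n` are i.i.d. Rademacher
random variables (one common sign per cluster), then
`E_ξ[ max_{f∈F} (1/N) Σ_i ξ_i Σ_j f(x_{ij}) ] ≤ (B/N)·√(2 log|F| Σ_i r_i²)`. -/
theorem massart_clustered
    {Ω' : Type*} [MeasurableSpace Ω'] (P : Measure Ω') [IsProbabilityMeasure P]
    {E : Type*} (n : ℕ) (r : Fin n → ℕ) (x : (i : Fin n) → Fin (r i) → E)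
    (ξ : Fin n → Ω' → ℝ) (hξmeas : ∀ i, Measurable (ξ i))
    (hξlaw : ∀ i, P.map (ξ i) = radMeasure)
    (hξindep : iIndepFun ξ P)
    (F : Finset (E → ℝ)) (hF : F.Nonempty) (B : ℝ)
    (hB : ∀ f ∈ F, ∀ y : E, |f y| ≤ B) :
    (∫ ω, F.sup' hF
        (fun f => (1 / ((∑ i, r i : ℕ) : ℝ)) *
          ∑ i : Fin n, ξ i ω * ∑ j : Fin (r i), f (x i j)) ∂P)
      ≤ (B / ((∑ i, r i : ℕ) : ℝ)) *
          Real.sqrt (2 * Real.log (F.card) * ∑ i : Fin n, ((r i : ℝ)) ^ 2) := by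
  set N : ℝ := ((∑ i, r i : ℕ) : ℝ)
  have hsubG (f) (hf : f ∈ F) := hasSubgaussianMGF_sum_mul_sum_of_abs_le x
    (fun i ↦ (hξmeas i).aemeasurable) hξlaw hξindep (hB f hf)
  -- `N = 0` makes both sides vanish; otherwise some `x i j` exists, and `0 ≤ |f (x i j)| ≤ B`.
  have hBN : |B| / N = B / N := by
    rcases eq_or_ne N 0 with hN | hN
    · simp [hN]
    obtain ⟨i, -, hi⟩ := exists_ne_zero_of_sum_ne_zero (Nat.cast_ne_zero.mp hN)
    obtain ⟨f, hf⟩ := hF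
    rw [abs_of_nonneg ((abs_nonneg _).trans (hB f hf (x i ⟨0, Nat.pos_of_ne_zero hi⟩)))]
  have hC : 2 * ↑(‖B‖₊ ^ 2 * ∑ i, (r i : ℝ≥0) ^ 2) * log #F
      = B ^ 2 * (2 * log #F * ∑ i, (r i : ℝ) ^ 2) := by
    push_cast
    rw [Real.norm_eq_abs, sq_abs]
    ring
  calc _ = 1 / N * ∫ ω, F.sup' hF (fun f ↦ ∑ i, ξ i ω * ∑ j, f (x i j)) ∂P :=
        integral_sup'_const_mul hF _ (by positivity)
    _ ≤ 1 / N * √(2 * ↑(‖B‖₊ ^ 2 * ∑ i, (r i : ℝ≥0) ^ 2) * log #F) := by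
        gcongr
        exact integral_sup'_le_sqrt_of_hasSubgaussianMGF hF hsubG
    _ = B / N * √(2 * log #F * ∑ i, (r i : ℝ) ^ 2) := by
        rw [hC, sqrt_mul (sq_nonneg B), sqrt_sq_eq_abs, ← hBN]
        ring
end
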